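/- Let φ : ℝⁿ → ℝ be C^{1,1}, let x⁰, u, w ∈ ℝⁿ, let t_k ↓ 0 be a positive sequence converging to 0 and wᵏ → w a sequence in ℝⁿ, and set xᵏ := x⁰ + t_k u + (1/2) t_k² wᵏ. Then limsup_{k → ∞} (φ(xᵏ) − φ(x⁰) − t_k ⟨∇φ(x⁰), u⟩)/((1/2) t_k²) ≤ ⟨∇φ(x⁰), w⟩ + φ°°(x⁰; u, u). -/

import Mathlib

/-!
Write `xᵏ = yᵏ + t_k u` with `yᵏ = x⁰ + ½ t_k² wᵏ`. For any `c > φ°°(x⁰; u, u)` the slope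
`s ↦ ⟨∇φ(y + s u), u⟩` grows at most like `c s` for `y` near `x⁰` and small `s > 0`, so
`φ(yᵏ + t_k u) − φ(yᵏ) − t_k ⟨∇φ(yᵏ), u⟩ ≤ c t_k² / 2`. With a `K`-Lipschitz gradient near `x⁰`,
`φ(yᵏ) − φ(x⁰) = ½ t_k² ⟨∇φ(x⁰), wᵏ⟩ + O(t_k⁴)` and `t_k ⟨∇φ(yᵏ) − ∇φ(x⁰), u⟩ = O(t_k³)`, so the
quotient is at most `c + ⟨∇φ(x⁰), wᵏ⟩ + o(1)`. The Lipschitz bound also keeps the quotient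
defining `φ°°` bounded above and the sequence bounded below, so neither `limsup` is a junk value.
-/

open Filter Topology Set
open scoped InnerProductSpace

noncomputable section

/-- A function is `C^{1,1}` iff it is Fréchet differentiable with locally Lipschitz
gradient. -/
def IsC11 {n : ℕ} (φ : EuclideanSpace ℝ (Fin n) → ℝ) : Prop :=
  Differentiable ℝ φ ∧ LocallyLipschitz (gradient φ)

/-- `φ°°(x⁰; u, u) = limsup_{x → x⁰, t ↓ 0} (⟨∇φ(x + t u), u⟩ − ⟨∇φ(x), u⟩)/t`. -/
def secondDD {n : ℕ} (φ : EuclideanSpace ℝ (Fin n) → ℝ)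
    (x0 u : EuclideanSpace ℝ (Fin n)) : ℝ :=
  Filter.limsup
    (fun p : EuclideanSpace ℝ (Fin n) × ℝ =>
      (⟪gradient φ (p.1 + p.2 • u), u⟫_ℝ - ⟪gradient φ p.1, u⟫_ℝ) / p.2)
    ((𝓝 x0) ×ˢ (𝓝[>] (0 : ℝ)))

theorem sub_sub_mul_deriv_le_of_deriv_sub_le {g g' : ℝ → ℝ} {T c : ℝ} (hT : 0 ≤ T)
    (hg : ∀ s ∈ Icc 0 T, HasDerivAt g (g' s) s) (hg' : ∀ s ∈ Ioo 0 T, g' s - g' 0 ≤ c * s) :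
    g T - g 0 - T * g' 0 ≤ c * T ^ 2 / 2 := by
  set ψ : ℝ → ℝ := fun s => g s - s * g' 0 - c / 2 * s ^ 2
  have hψ : ∀ s ∈ Icc 0 T, HasDerivAt ψ (g' s - g' 0 - c * s) s := fun s hs =>
    (((hg s hs).sub (hasDerivAt_mul_const (g' 0))).sub
      ((hasDerivAt_pow 2 s).const_mul (c / 2))).congr_deriv (by ring)
  have hanti : AntitoneOn ψ (Icc 0 T) := antitoneOn_of_deriv_nonpos (convex_Icc 0 T)
    (fun s hs => (hψ s hs).continuousAt.continuousWithinAt)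
    (fun s hs => (hψ s (interior_subset hs)).differentiableAt.differentiableWithinAt)
    (fun s hs => by
      rw [interior_Icc] at hs
      rw [(hψ s (Ioo_subset_Icc_self hs)).deriv]
      linarith [hg' s hs])
  have := hanti (left_mem_Icc.2 hT) (right_mem_Icc.2 hT) hT
  simp only [ψ] at this
  linarith

theorem abs_sub_sub_mul_deriv_le_of_abs_deriv_sub_le {g g' : ℝ → ℝ} {T c : ℝ} (hT : 0 ≤ T)
    (hg : ∀ s ∈ Icc 0 T, HasDerivAt g (g' s) s) (hg' : ∀ s ∈ Ioo 0 T, |g' s - g' 0| ≤ c * s) :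
    |g T - g 0 - T * g' 0| ≤ c * T ^ 2 / 2 := by
  have upper := sub_sub_mul_deriv_le_of_deriv_sub_le hT hg fun s hs => (abs_le.1 (hg' s hs)).2
  have lower := sub_sub_mul_deriv_le_of_deriv_sub_le (g := -g) (g' := -g') hT
    (fun s hs => (hg s hs).neg) fun s hs => by
      simp only [Pi.neg_apply]; linarith [(abs_le.1 (hg' s hs)).1]
  simp only [Pi.neg_apply] at lower
  exact abs_le.2 ⟨by linarith, upper⟩

variable {E : Type*} [NormedAddCommGroup E] [InnerProductSpace ℝ E]

theorem LipschitzOnWith.abs_inner_sub_inner_le {X : Type*} [PseudoMetricSpace X] {f : X → E}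
    {K : NNReal} {s : Set X} (hf : LipschitzOnWith K f s) {x y : X} (hx : x ∈ s) (hy : y ∈ s)
    (u : E) : |⟪f y, u⟫_ℝ - ⟪f x, u⟫_ℝ| ≤ K * dist y x * ‖u‖ := by
  rw [← inner_sub_left]
  calc |⟪f y - f x, u⟫_ℝ| ≤ ‖f y - f x‖ * ‖u‖ := abs_real_inner_le_norm _ _
    _ ≤ K * dist y x * ‖u‖ := by
      gcongr
      rw [← dist_eq_norm]
      exact hf.dist_le_mul y hy x hx

theorem LocallyLipschitz.isBoundedUnder_le_inner_slope {f : E → E} (hf : LocallyLipschitz f)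
    (x0 u : E) :
    IsBoundedUnder (· ≤ ·) (𝓝 x0 ×ˢ 𝓝[>] (0 : ℝ))
      (fun p : E × ℝ => (⟪f (p.1 + p.2 • u), u⟫_ℝ - ⟪f p.1, u⟫_ℝ) / p.2) := by
  obtain ⟨K, U, hU, hK⟩ := hf x0
  have hshift : Tendsto (fun p : E × ℝ => p.1 + p.2 • u) (𝓝 x0 ×ˢ 𝓝[>] 0) (𝓝 x0) := by
    have : Tendsto (fun p : E × ℝ => p.1 + p.2 • u) (𝓝 (x0, 0)) (𝓝 (x0 + (0 : ℝ) • u)) :=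
      (by fun_prop : Continuous fun p : E × ℝ => p.1 + p.2 • u).tendsto _
    rw [zero_smul, add_zero, nhds_prod_eq] at this
    exact this.mono_left (prod_mono le_rfl nhdsWithin_le_nhds)
  refine isBoundedUnder_of_eventually_le (a := K * ‖u‖ ^ 2) ?_
  filter_upwards [tendsto_fst.eventually hU, hshift.eventually hU,
    tendsto_snd.eventually self_mem_nhdsWithin] with p hp hpu (hpos : 0 < p.2)
  rw [div_le_iff₀ hpos]
  calc _ ≤ K * dist (p.1 + p.2 • u) p.1 * ‖u‖ :=
        (le_abs_self _).trans (hK.abs_inner_sub_inner_le hp hpu u)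
    _ = K * ‖u‖ ^ 2 * p.2 := by
      rw [dist_self_add_left, norm_smul, Real.norm_of_nonneg hpos.le]
      ring

variable [CompleteSpace E]

theorem hasDerivAt_comp_add_smul {φ : E → ℝ} {x v : E} {s : ℝ}
    (hφ : DifferentiableAt ℝ φ (x + s • v)) :
    HasDerivAt (fun s : ℝ => φ (x + s • v)) ⟪gradient φ (x + s • v), v⟫_ℝ s := by
  have hline : HasDerivAt (fun s : ℝ => x + s • v) v s := by
    simpa using ((hasDerivAt_id s).smul_const v).const_add x
  have := hφ.hasGradientAt.hasFDerivAt.comp_hasDerivAt s hline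
  rwa [InnerProductSpace.toDual_apply_apply] at this

theorem abs_sub_sub_inner_gradient_le {φ : E → ℝ} (hφ : Differentiable ℝ φ) {K : NNReal}
    {s : Set E} (hs : Convex ℝ s) (hK : LipschitzOnWith K (gradient φ) s) {x v : E}
    (hx : x ∈ s) (hxv : x + v ∈ s) :
    |φ (x + v) - φ x - ⟪gradient φ x, v⟫_ℝ| ≤ K * ‖v‖ ^ 2 / 2 := by
  have hslope : ∀ τ ∈ Ioo (0 : ℝ) 1,
      |⟪gradient φ (x + τ • v), v⟫_ℝ - ⟪gradient φ (x + (0 : ℝ) • v), v⟫_ℝ| ≤ K * ‖v‖ ^ 2 * τ :=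
    fun τ hτ => by
      rw [zero_smul, add_zero]
      calc _ ≤ K * dist (x + τ • v) x * ‖v‖ :=
            hK.abs_inner_sub_inner_le hx (hs.add_smul_mem hx hxv (Ioo_subset_Icc_self hτ)) v
        _ = K * ‖v‖ ^ 2 * τ := by
          rw [dist_self_add_left, norm_smul, Real.norm_of_nonneg hτ.1.le]
          ring
  simpa using abs_sub_sub_mul_deriv_le_of_abs_deriv_sub_le zero_le_one
    (fun τ _ => hasDerivAt_comp_add_smul (hφ _)) hslope

theorem sub_sub_mul_inner_gradient_le {φ : E → ℝ} (hφ : Differentiable ℝ φ) {x v : E} {T c : ℝ}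
    (hT : 0 ≤ T)
    (hslope : ∀ s ∈ Ioo 0 T, ⟪gradient φ (x + s • v), v⟫_ℝ - ⟪gradient φ x, v⟫_ℝ ≤ c * s) :
    φ (x + T • v) - φ x - T * ⟪gradient φ x, v⟫_ℝ ≤ c * T ^ 2 / 2 := by
  simpa using sub_sub_mul_deriv_le_of_deriv_sub_le hT
    (fun s _ => hasDerivAt_comp_add_smul (hφ _)) (by simpa using hslope)

theorem eventually_sub_sub_mul_inner_gradient_le {φ : E → ℝ} (hφ : Differentiable ℝ φ)
    {x0 u : E} {c : ℝ}
    (hc : ∀ᶠ p in 𝓝 x0 ×ˢ 𝓝[>] (0 : ℝ),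
      (⟪gradient φ (p.1 + p.2 • u), u⟫_ℝ - ⟪gradient φ p.1, u⟫_ℝ) / p.2 < c) :
    ∀ᶠ p in 𝓝 x0 ×ˢ 𝓝[>] (0 : ℝ),
      φ (p.1 + p.2 • u) - φ p.1 - p.2 * ⟪gradient φ p.1, u⟫_ℝ ≤ c * p.2 ^ 2 / 2 := by
  obtain ⟨pa, hpa, pb, hpb, hab⟩ := eventually_prod_iff.1 hc
  obtain ⟨ε, hε, hεb⟩ := mem_nhdsGT_iff_exists_Ioo_subset.1 hpb
  refine eventually_prod_iff.2 ⟨pa, hpa, (· ∈ Ioo 0 ε), Ioo_mem_nhdsGT hε, fun {x} hx {T} hT => ?_⟩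
  refine sub_sub_mul_inner_gradient_le hφ hT.1.le fun s hs => ?_
  have := hab hx (hεb ⟨hs.1, hs.2.trans hT.2⟩)
  rw [div_lt_iff₀ hs.1] at this
  exact this.le

def secondOrderQuotient (φ : E → ℝ) (x0 u w : E) (t : ℝ) : ℝ :=
  (φ (x0 + t • u + ((1 / 2) * t ^ 2) • w) - φ x0 - t * ⟪gradient φ x0, u⟫_ℝ) / ((1 / 2) * t ^ 2)

section LipschitzGradient

variable {φ : E → ℝ} {K : NNReal} {s : Set E} {x0 u w : E} {t : ℝ}

theorem inner_gradient_sub_le_secondOrderQuotient (hφ : Differentiable ℝ φ) (hs : Convex ℝ s)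
    (hK : LipschitzOnWith K (gradient φ) s) (ht : 0 < t) (hx0 : x0 ∈ s)
    (hx : x0 + t • u + ((1 / 2) * t ^ 2) • w ∈ s) :
    ⟪gradient φ x0, w⟫_ℝ - K * ‖u + (t / 2) • w‖ ^ 2 ≤ secondOrderQuotient φ x0 u w t := by
  have hx_eq : x0 + t • u + ((1 / 2) * t ^ 2) • w = x0 + t • (u + (t / 2) • w) := by
    rw [add_assoc, smul_add, smul_smul]
    ring_nf
  rw [hx_eq] at hx
  have hTaylor := (abs_le.1 (abs_sub_sub_inner_gradient_le hφ hs hK hx0 hx)).1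
  rw [norm_smul, Real.norm_of_nonneg ht.le, inner_smul_right, inner_add_right,
    inner_smul_right] at hTaylor
  rw [secondOrderQuotient, hx_eq, le_div_iff₀ (by positivity)]
  linear_combination hTaylor

theorem secondOrderQuotient_le {c : ℝ} (hφ : Differentiable ℝ φ) (hs : Convex ℝ s)
    (hK : LipschitzOnWith K (gradient φ) s) (ht : 0 < t) (hx0 : x0 ∈ s)
    (hy : x0 + ((1 / 2) * t ^ 2) • w ∈ s)
    (hstep : φ (x0 + ((1 / 2) * t ^ 2) • w + t • u) - φ (x0 + ((1 / 2) * t ^ 2) • w)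
      - t * ⟪gradient φ (x0 + ((1 / 2) * t ^ 2) • w), u⟫_ℝ ≤ c * t ^ 2 / 2) :
    secondOrderQuotient φ x0 u w t
      ≤ c + ⟪gradient φ x0, w⟫_ℝ + K * t ^ 2 / 4 * ‖w‖ ^ 2 + K * t * ‖w‖ * ‖u‖ := by
  have hr : 0 < (1 / 2) * t ^ 2 := by positivity
  have hTaylor := (abs_le.1 (abs_sub_sub_inner_gradient_le hφ hs hK hx0 hy)).2
  have hgrad := mul_le_mul_of_nonneg_left (abs_le.1 (hK.abs_inner_sub_inner_le hx0 hy u)).2 ht.le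
  rw [norm_smul, Real.norm_of_nonneg hr.le, inner_smul_right] at hTaylor
  rw [dist_self_add_left, norm_smul, Real.norm_of_nonneg hr.le] at hgrad
  rw [secondOrderQuotient, add_right_comm, div_le_iff₀ hr]
  linear_combination hstep + hTaylor + hgrad

end LipschitzGradient

theorem LocallyLipschitz.exists_lipschitzOnWith_ball {X Y : Type*} [PseudoMetricSpace X]
    [PseudoMetricSpace Y] {f : X → Y} (hf : LocallyLipschitz f) (x : X) :
    ∃ K, ∃ δ > 0, LipschitzOnWith K f (Metric.ball x δ) := by
  obtain ⟨K, U, hU, hK⟩ := hf x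
  obtain ⟨δ, hδ, hδU⟩ := Metric.mem_nhds_iff.1 hU
  exact ⟨K, δ, hδ, hK.mono hδU⟩

section Sequences

variable {ι : Type*} {l : Filter ι} {φ : E → ℝ} {x0 u w : E} {t : ι → ℝ} {wk : ι → E}

theorem isCoboundedUnder_le_secondOrderQuotient [l.NeBot] (hφ : Differentiable ℝ φ)
    (hlip : LocallyLipschitz (gradient φ)) (htpos : ∀ᶠ i in l, 0 < t i)
    (ht0 : Tendsto t l (𝓝 0)) (hwk : Tendsto wk l (𝓝 w)) :
    IsCoboundedUnder (· ≤ ·) l (fun i => secondOrderQuotient φ x0 u (wk i) (t i)) := by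
  obtain ⟨K, δ, hδ, hK⟩ := hlip.exists_lipschitzOnWith_ball x0
  have hx : Tendsto (fun i => x0 + t i • u + ((1 / 2) * t i ^ 2) • wk i) l (𝓝 x0) :=
    ((by fun_prop : Continuous fun p : ℝ × E => x0 + p.1 • u + ((1 / 2) * p.1 ^ 2) • p.2).tendsto'
      (0, w) x0 (by simp)).comp (ht0.prodMk_nhds hwk)
  have hlow := ((by fun_prop : Continuous fun p : ℝ × E =>
      ⟪gradient φ x0, p.2⟫_ℝ - K * ‖u + (p.1 / 2) • p.2‖ ^ 2).tendsto (0, w)).comp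
    (ht0.prodMk_nhds hwk)
  refine (hlow.isBoundedUnder_ge.mono_ge ?_).isCoboundedUnder_le
  filter_upwards [htpos, hx.eventually_mem (Metric.ball_mem_nhds x0 hδ)] with i hti hxi
  exact inner_gradient_sub_le_secondOrderQuotient hφ (convex_ball x0 δ) hK hti
    (Metric.mem_ball_self hδ) hxi

theorem limsup_secondOrderQuotient_le [l.NeBot] {c : ℝ} (hφ : Differentiable ℝ φ)
    (hlip : LocallyLipschitz (gradient φ)) (htpos : ∀ᶠ i in l, 0 < t i)
    (ht0 : Tendsto t l (𝓝 0)) (hwk : Tendsto wk l (𝓝 w))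
    (hc : ∀ᶠ p in 𝓝 x0 ×ˢ 𝓝[>] (0 : ℝ),
      (⟪gradient φ (p.1 + p.2 • u), u⟫_ℝ - ⟪gradient φ p.1, u⟫_ℝ) / p.2 < c) :
    limsup (fun i => secondOrderQuotient φ x0 u (wk i) (t i)) l ≤ ⟪gradient φ x0, w⟫_ℝ + c := by
  obtain ⟨K, δ, hδ, hK⟩ := hlip.exists_lipschitzOnWith_ball x0
  -- `(e :)` elaborates the composite before matching the stated type (otherwise `whnf` times out)
  have hy : Tendsto (fun i => x0 + ((1 / 2) * t i ^ 2) • wk i) l (𝓝 x0) :=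
    (((by fun_prop : Continuous fun p : ℝ × E => x0 + ((1 / 2) * p.1 ^ 2) • p.2).tendsto'
      (0, w) x0 (by simp)).comp (ht0.prodMk_nhds hwk) :)
  have hpair : Tendsto (fun i => (x0 + ((1 / 2) * t i ^ 2) • wk i, t i)) l
      (𝓝 x0 ×ˢ 𝓝[>] 0) := hy.prodMk (tendsto_nhdsWithin_iff.2 ⟨ht0, htpos⟩)
  have hupper := ((by fun_prop : Continuous fun p : ℝ × E => c + ⟪gradient φ x0, p.2⟫_ℝ
      + K * p.1 ^ 2 / 4 * ‖p.2‖ ^ 2 + K * p.1 * ‖p.2‖ * ‖u‖).tendsto'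
    (0, w) (⟪gradient φ x0, w⟫_ℝ + c) (by simp [add_comm])).comp (ht0.prodMk_nhds hwk)
  refine (limsup_le_limsup ?_ (isCoboundedUnder_le_secondOrderQuotient hφ hlip htpos ht0 hwk)
    hupper.isBoundedUnder_le).trans hupper.limsup_eq.le
  filter_upwards [htpos, hpair.eventually (eventually_sub_sub_mul_inner_gradient_le hφ hc),
    hy.eventually_mem (Metric.ball_mem_nhds x0 hδ)] with i hti hstep hyi
  exact secondOrderQuotient_le hφ (convex_ball x0 δ) hK hti (Metric.mem_ball_self hδ) hyi hstep

end Sequences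

/-- The key second-order expansion estimate used in the proofs of Proposition 3.1
and Theorem 4.2. -/
theorem stmt_5 {n : ℕ} (φ : EuclideanSpace ℝ (Fin n) → ℝ) (hφ : IsC11 φ)
    (x0 u w : EuclideanSpace ℝ (Fin n))
    (t : ℕ → ℝ) (htpos : ∀ k, 0 < t k) (ht0 : Tendsto t atTop (𝓝 0))
    (wk : ℕ → EuclideanSpace ℝ (Fin n)) (hwk : Tendsto wk atTop (𝓝 w)) :
    Filter.limsup (fun k : ℕ =>
        (φ (x0 + t k • u + ((1 / 2) * (t k) ^ 2) • wk k) - φ x0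
            - t k * ⟪gradient φ x0, u⟫_ℝ) / ((1 / 2) * (t k) ^ 2)) atTop
      ≤ ⟪gradient φ x0, w⟫_ℝ + secondDD φ x0 u := by
  obtain ⟨hφ, hlip⟩ := hφ
  change limsup (fun k => secondOrderQuotient φ x0 u (wk k) (t k)) atTop ≤ _
  rw [← sub_le_iff_le_add']
  refine le_of_forall_gt_imp_ge_of_dense fun c hc => sub_le_iff_le_add'.2 ?_
  exact limsup_secondOrderQuotient_le hφ hlip (.of_forall htpos) ht0 hwk
    (eventually_lt_of_limsup_lt hc (hlip.isBoundedUnder_le_inner_slope x0 u))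

end
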